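/- arXiv:1405.3296 — 4 statements merged into one kernel-verified Lean document; each statement's English description precedes it below -/
import Mathlib

section
/- In the set-cover instance game with the deterministic greedy algorithm, there is no pure Nash equilibrium in which some agent i has |S_i| > 1. -/
/-!
In an equilibrium every agent with a nonempty strategy is selected, since otherwise switching to
`∅` would save its cost. Selected strategies are pairwise disjoint: an element shared by two of
them is already covered when the later one is selected, so that agent can drop it, still be
selected and pay less. Hence if `x ∈ S i` and `#(S i) > 1`, agent `i` can switch to `{x}`: nobody
else covers `x`, so the greedy algorithm still selects `i`, and its cost drops to `alpha`.
-/

open Finset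

section SCIG

variable {α : Type*} [DecidableEq α] {m : ℕ}

/-- Inner loop of the greedy algorithm: scan the remaining order, keeping the
subset covering the most as-yet-uncovered elements (ties broken by order). -/
def bestIdx (S : Fin m → Finset α) (Ucov : Finset α) : List (Fin m) → Fin m → Fin m
  | [], b => b
  | i :: rest, b =>
      bestIdx S Ucov rest (if (S b ∩ Ucov).card < (S i ∩ Ucov).card then i else b)

/-- Greedy set-cover: repeatedly select the subset (scanned in `order`) covering
the most uncovered elements, until nothing new can be covered.  Returns the
selected agents, in order of selection. -/
def greedyList (S : Fin m → Finset α) (order : List (Fin m)) (Ucov : Finset α) :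
    List (Fin m) :=
  match order with
  | [] => []
  | b :: rest =>
    let best := bestIdx S Ucov rest b
    if h : (S best ∩ Ucov).Nonempty then
      best :: greedyList S (b :: rest) (Ucov \ S best)
    else []
termination_by Ucov.card
decreasing_by
  apply Finset.card_lt_card
  refine ⟨Finset.sdiff_subset, fun hsub => ?_⟩
  obtain ⟨x, hx⟩ := h
  have hx1 := (Finset.mem_inter.mp hx).1
  have hx2 := (Finset.mem_inter.mp hx).2
  have := hsub hx2
  simp [Finset.mem_sdiff, hx1] at this
  exact this.2 hx1

/-- The set-cover instance induced by a joint strategy: its universe. -/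
def unionSet (S : Fin m → Finset α) : Finset α := Finset.univ.biUnion S

/-- The cover computed by the deterministic greedy algorithm (fixed order 1..m). -/
def coverD (S : Fin m → Finset α) : Finset (Fin m) :=
  (greedyList S (List.finRange m) (unionSet S)).toFinset

/-- Utility of agent `i` in the deterministic game. -/
noncomputable def utilD (beta alpha : ℝ) (S : Fin m → Finset α) (i : Fin m) : ℝ :=
  (if i ∈ coverD S then beta else 0) - alpha * (S i).card

/-- Pure Nash equilibrium of the deterministic game. -/
def IsNashD (beta alpha : ℝ) (S : Fin m → Finset α) : Prop :=
  ∀ (i : Fin m) (T : Finset α),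
    utilD beta alpha (Function.update S i T) i ≤ utilD beta alpha S i

/-- Probability (over a uniformly random permutation of the agents) that agent
`i`'s subset is selected by the non-deterministic greedy algorithm. -/
noncomputable def probSel (S : Fin m → Finset α) (i : Fin m) : ℝ :=
  (Finset.univ.filter (fun π : Equiv.Perm (Fin m) =>
      i ∈ greedyList S ((List.finRange m).map π) (unionSet S))).card
    / (Nat.factorial m)

/-- Expected utility of agent `i` in the non-deterministic game. -/
noncomputable def utilN (beta alpha : ℝ) (S : Fin m → Finset α) (i : Fin m) : ℝ :=
  beta * probSel S i - alpha * (S i).card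

/-- Pure Nash equilibrium of the non-deterministic game. -/
def IsNashN (beta alpha : ℝ) (S : Fin m → Finset α) : Prop :=
  ∀ (i : Fin m) (T : Finset α),
    utilN beta alpha (Function.update S i T) i ≤ utilN beta alpha S i

end SCIG

theorem List.argmax_eq_some_of_le {ι β : Type*} [DecidableEq ι] [LinearOrder β] {f g : ι → β}
    {l : List ι} {a : ι} (h : l.argmax f = some a) (hle : ∀ b ∈ l, g b ≤ f b) (ha : g a = f a) :
    l.argmax g = some a := by
  obtain ⟨hal, hmax, hfirst⟩ := List.argmax_eq_some_iff.mp h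
  refine List.argmax_eq_some_iff.mpr ⟨hal, fun b hb => ?_, fun b hb hab => hfirst b hb ?_⟩
  · exact ha ▸ (hle b hb).trans (hmax b hb)
  · exact ha ▸ hab.trans (hle b hb)

theorem Finset.sdiff_ssubset_of_inter_nonempty {α : Type*} [DecidableEq α] {s t : Finset α}
    (h : (t ∩ s).Nonempty) : s \ t ⊂ s :=
  sdiff_lt_left.2 (not_disjoint_iff_nonempty_inter.2 h)

section Greedy

variable {α : Type*} [DecidableEq α] {m : ℕ}

theorem argmax_cons_eq_bestIdx (S : Fin m → Finset α) (U : Finset α) (l : List (Fin m))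
    (b : Fin m) : (b :: l).argmax (fun k => #(S k ∩ U)) = some (bestIdx S U l b) := by
  induction l generalizing b with
  | nil => rfl
  | cons i l ih =>
    rw [bestIdx, ← ih]
    simp only [List.argmax, List.foldl_cons, List.argAux]
    split_ifs <;> rfl

theorem bestIdx_eq_of_card_inter_le {S S' : Fin m → Finset α} {U : Finset α} {l : List (Fin m)}
    {b : Fin m} (hle : ∀ k, #(S' k ∩ U) ≤ #(S k ∩ U))
    (hbest : #(S' (bestIdx S U l b) ∩ U) = #(S (bestIdx S U l b) ∩ U)) :
    bestIdx S' U l b = bestIdx S U l b :=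
  Option.some_injective _ <| (argmax_cons_eq_bestIdx S' U l b).symm.trans <|
    List.argmax_eq_some_of_le (argmax_cons_eq_bestIdx S U l b) (fun k _ => hle k) hbest

theorem bestIdx_congr {S S' : Fin m → Finset α} {U U' : Finset α} {l : List (Fin m)}
    {b : Fin m} (h : ∀ k, #(S' k ∩ U') = #(S k ∩ U)) : bestIdx S' U' l b = bestIdx S U l b := by
  apply Option.some_injective
  rw [← argmax_cons_eq_bestIdx, ← argmax_cons_eq_bestIdx]
  simp only [h]

theorem card_inter_le_bestIdx (S : Fin m → Finset α) (U : Finset α) {l : List (Fin m)}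
    {b k : Fin m} (hk : k ∈ b :: l) : #(S k ∩ U) ≤ #(S (bestIdx S U l b) ∩ U) :=
  List.le_of_mem_argmax (f := fun k => #(S k ∩ U)) hk (argmax_cons_eq_bestIdx S U l b)

theorem greedyList_cons (S : Fin m → Finset α) (b : Fin m) (rest : List (Fin m))
    (U : Finset α) :
    greedyList S (b :: rest) U =
      if (S (bestIdx S U rest b) ∩ U).Nonempty then
        bestIdx S U rest b :: greedyList S (b :: rest) (U \ S (bestIdx S U rest b))
      else [] := by
  rw [greedyList, dite_eq_ite]

theorem greedyList_congr {S S' : Fin m → Finset α} {U U' : Finset α}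
    (h : ∀ k, S' k ∩ U' = S k ∩ U) (order : List (Fin m)) :
    greedyList S' order U' = greedyList S order U := by
  induction U using Finset.strongInduction generalizing U' with
  | H U ih =>
    cases order with
    | nil => rw [greedyList, greedyList]
    | cons b rest =>
      have hbest : bestIdx S' U' rest b = bestIdx S U rest b :=
        bestIdx_congr fun k => by rw [h]
      rw [greedyList_cons S' b rest U', greedyList_cons S b rest U, hbest, h]
      split_ifs with hne
      · congr 1
        refine ih _ (sdiff_ssubset_of_inter_nonempty hne) fun k => ?_
        ext a
        have hk := Finset.ext_iff.mp (h k) a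
        have hb := Finset.ext_iff.mp (h (bestIdx S U rest b)) a
        simp only [mem_inter, mem_sdiff] at hk hb ⊢
        tauto
      · rfl

theorem inter_nonempty_of_mem_greedyList {S : Fin m → Finset α} {order : List (Fin m)}
    {U : Finset α} {k : Fin m} (hk : k ∈ greedyList S order U) : (S k ∩ U).Nonempty := by
  induction U using Finset.strongInduction with
  | H U ih =>
    cases order with
    | nil => simp [greedyList] at hk
    | cons b rest =>
      rw [greedyList_cons] at hk
      split_ifs at hk with hne
      · rcases List.mem_cons.mp hk with rfl | hk
        · exact hne
        · exact (ih _ (sdiff_ssubset_of_inter_nonempty hne) hk).mono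
            (inter_subset_inter_left sdiff_subset)
      · simp at hk

theorem exists_mem_greedyList_of_mem {S : Fin m → Finset α} {order : List (Fin m)}
    {U : Finset α} {i : Fin m} {x : α} (hi : i ∈ order) (hxi : x ∈ S i) (hxU : x ∈ U) :
    ∃ k ∈ greedyList S order U, x ∈ S k := by
  induction U using Finset.strongInduction with
  | H U ih =>
    cases order with
    | nil => simp at hi
    | cons b rest =>
      set best := bestIdx S U rest b
      have hne : (S best ∩ U).Nonempty := card_pos.mp <|
        (card_pos.mpr ⟨x, mem_inter.mpr ⟨hxi, hxU⟩⟩).trans_le (card_inter_le_bestIdx S U hi)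
      rw [greedyList_cons, if_pos hne]
      by_cases hxb : x ∈ S best
      · exact ⟨best, List.mem_cons_self, hxb⟩
      · obtain ⟨k, hk, hxk⟩ := ih _ (sdiff_ssubset_of_inter_nonempty hne)
          (mem_sdiff.mpr ⟨hxU, hxb⟩)
        exact ⟨k, List.mem_cons_of_mem _ hk, hxk⟩

/-- Shrinking `S j` to `T` lowers only the score of `j`, which does not change the winner of a
step that `j` loses; and once every element of `S j \ T` is covered, both runs see the same sets. -/
theorem mem_greedyList_update_of_covered {S : Fin m → Finset α} {order : List (Fin m)}
    {U : Finset α} {j : Fin m} {T : Finset α} (hT : T ⊆ S j)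
    (hj : j ∈ greedyList S order U)
    (hcov : ∀ x ∈ S j \ T, x ∈ U → ∃ k ∈ greedyList S order U,
      x ∈ S k ∧ (greedyList S order U).idxOf k < (greedyList S order U).idxOf j) :
    j ∈ greedyList (Function.update S j T) order U := by
  induction U using Finset.strongInduction with
  | H U ih =>
    by_cases hU : ∀ x ∈ S j \ T, x ∉ U
    · have hinter : ∀ k, Function.update S j T k ∩ U = S k ∩ U := by
        intro k
        rcases eq_or_ne k j with rfl | hkj
        · ext x
          have hxT := @hT x
          have hxU := hU x
          simp only [Function.update_self, mem_inter, mem_sdiff] at hxU ⊢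
          tauto
        · rw [Function.update_of_ne hkj]
      rwa [greedyList_congr hinter]
    push Not at hU
    obtain ⟨x, hx, hxU⟩ := hU
    obtain ⟨k, -, -, hprec⟩ := hcov x hx hxU
    cases order with
    | nil => simp [greedyList] at hj
    | cons b rest =>
      set best := bestIdx S U rest b
      set L := greedyList S (b :: rest) (U \ S best)
      have hne : (S best ∩ U).Nonempty := by
        by_contra hne
        rw [greedyList_cons, if_neg hne] at hj
        simp at hj
      have hL : greedyList S (b :: rest) U = best :: L := by rw [greedyList_cons, if_pos hne]
      rw [hL] at hj hcov hprec
      have hbj : best ≠ j := by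
        rintro rfl
        rw [List.idxOf_cons_self] at hprec
        exact Nat.not_lt_zero _ hprec
      have hupdate_best : Function.update S j T best = S best := Function.update_of_ne hbj _ _
      have hbest : bestIdx (Function.update S j T) U rest b = best := by
        refine bestIdx_eq_of_card_inter_le (fun k => ?_) (by rw [hupdate_best])
        rcases eq_or_ne k j with rfl | hkj
        · rw [Function.update_self]; exact card_le_card (inter_subset_inter_right hT)
        · rw [Function.update_of_ne hkj]
      rw [greedyList_cons, hbest, hupdate_best, if_pos hne]
      refine List.mem_cons_of_mem _ (ih _ (sdiff_ssubset_of_inter_nonempty hne)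
        ((List.mem_cons.mp hj).resolve_left hbj.symm) fun y hy hyU => ?_)
      obtain ⟨k, hk, hyk, hprec⟩ := hcov y hy (mem_sdiff.mp hyU).1
      have hkb : best ≠ k := by rintro rfl; exact (mem_sdiff.mp hyU).2 hyk
      rw [List.idxOf_cons_ne _ hkb, List.idxOf_cons_ne _ hbj] at hprec
      exact ⟨k, (List.mem_cons.mp hk).resolve_left hkb.symm, hyk, Nat.succ_lt_succ_iff.mp hprec⟩

end Greedy

section Nash

variable {α : Type*} [DecidableEq α] {m : ℕ} {beta alpha : ℝ} {S : Fin m → Finset α}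

theorem subset_unionSet (S : Fin m → Finset α) (k : Fin m) : S k ⊆ unionSet S :=
  subset_biUnion_of_mem S (mem_univ k)

theorem update_subset_unionSet {i : Fin m} {T : Finset α} (hT : T ⊆ S i) (k : Fin m) :
    Function.update S i T k ⊆ unionSet S := by
  rcases eq_or_ne k i with rfl | hki
  · rw [Function.update_self]
    exact hT.trans (subset_unionSet S k)
  · rw [Function.update_of_ne hki]
    exact subset_unionSet S k

theorem coverD_eq_toFinset_greedyList {U : Finset α} (hU : ∀ k, S k ⊆ U) :
    coverD S = (greedyList S (List.finRange m) U).toFinset := by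
  rw [coverD, greedyList_congr fun k => ?_]
  rw [inter_eq_left.mpr (hU k), inter_eq_left.mpr (subset_unionSet S k)]

theorem IsNashD.mem_coverD_of_nonempty (hS : IsNashD beta alpha S) (halpha : 0 < alpha)
    {i : Fin m} (hi : (S i).Nonempty) : i ∈ coverD S := by
  by_contra hcov
  have hcov' : i ∉ coverD (Function.update S i ∅) := fun h => by
    simpa using inter_nonempty_of_mem_greedyList (List.mem_toFinset.mp h)
  have hdev := hS i ∅
  simp only [utilD, hcov, hcov', if_false, Function.update_self, card_empty, Nat.cast_zero,
    mul_zero] at hdev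
  have hpos : (0 : ℝ) < #(S i) := by exact_mod_cast hi.card_pos
  nlinarith

theorem IsNashD.card_le_of_mem_coverD_update (hS : IsNashD beta alpha S) (halpha : 0 < alpha)
    {i : Fin m} {T : Finset α} (hi : i ∈ coverD S)
    (hiT : i ∈ coverD (Function.update S i T)) : #(S i) ≤ #T := by
  have hdev := hS i T
  simp only [utilD, hi, hiT, if_true, Function.update_self] at hdev
  exact_mod_cast le_of_mul_le_mul_left (by linarith : alpha * #(S i) ≤ alpha * #T) halpha

theorem IsNashD.idxOf_greedyList_le (hS : IsNashD beta alpha S) (halpha : 0 < alpha)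
    {j k : Fin m} {x : α} (hxj : x ∈ S j) (hxk : x ∈ S k) :
    (greedyList S (List.finRange m) (unionSet S)).idxOf j ≤
      (greedyList S (List.finRange m) (unionSet S)).idxOf k := by
  by_contra hlt
  have hj := hS.mem_coverD_of_nonempty halpha ⟨x, hxj⟩
  have hk := List.mem_toFinset.mp (hS.mem_coverD_of_nonempty halpha ⟨x, hxk⟩)
  have hj' : j ∈ coverD (Function.update S j ((S j).erase x)) := by
    rw [coverD_eq_toFinset_greedyList (update_subset_unionSet (erase_subset x (S j))),
      List.mem_toFinset]
    refine mem_greedyList_update_of_covered (erase_subset x (S j)) (List.mem_toFinset.mp hj)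
      fun y hy _ => ⟨k, hk, ?_, not_le.mp hlt⟩
    rw [sdiff_erase_self hxj, mem_singleton] at hy
    rwa [hy]
  exact (card_erase_lt_of_mem hxj).not_ge (hS.card_le_of_mem_coverD_update halpha hj hj')

theorem IsNashD.pairwise_disjoint (hS : IsNashD beta alpha S) (halpha : 0 < alpha) :
    Pairwise fun j k => Disjoint (S j) (S k) := by
  intro j k hjk
  refine disjoint_left.mpr fun x hxj hxk => hjk ?_
  have hj := List.mem_toFinset.mp (hS.mem_coverD_of_nonempty halpha ⟨x, hxj⟩)
  exact (List.idxOf_inj hj).mp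
    ((hS.idxOf_greedyList_le halpha hxj hxk).antisymm (hS.idxOf_greedyList_le halpha hxk hxj))

theorem IsNashD.mem_coverD_update_singleton (hS : IsNashD beta alpha S) (halpha : 0 < alpha)
    {i : Fin m} {x : α} (hx : x ∈ S i) : i ∈ coverD (Function.update S i {x}) := by
  rw [coverD_eq_toFinset_greedyList (update_subset_unionSet (singleton_subset_iff.mpr hx)),
    List.mem_toFinset]
  obtain ⟨k, hk, hxk⟩ := exists_mem_greedyList_of_mem (S := Function.update S i {x})
    (List.mem_finRange i)
    (by simp)
    (subset_unionSet S i hx)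
  obtain rfl : k = i := by
    by_contra hki
    rw [Function.update_of_ne hki] at hxk
    exact disjoint_left.mp (hS.pairwise_disjoint halpha hki) hxk hx
  exact hk

end Nash

theorem scigD_no_big_strategy_general {α : Type*} [DecidableEq α] {m : ℕ}
    (beta alpha : ℝ) (halpha : 0 < alpha) :
    ¬ ∃ S : Fin m → Finset α, IsNashD beta alpha S ∧ ∃ i : Fin m, 1 < (S i).card := by
  rintro ⟨S, hS, i, hi⟩
  obtain ⟨x, hx⟩ := card_pos.mp (one_pos.trans hi)
  have hcard := hS.card_le_of_mem_coverD_update halpha (hS.mem_coverD_of_nonempty halpha ⟨x, hx⟩)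
    (hS.mem_coverD_update_singleton halpha hx)
  rw [card_singleton] at hcard
  omega

/-- With the deterministic greedy algorithm, there is no pure Nash
equilibrium in which some agent's strategy has more than one element. -/
theorem scigD_no_big_strategy {α : Type*} [DecidableEq α] {m : ℕ}
    (beta alpha : ℝ) (hbeta : 0 < beta) (halpha : 0 < alpha) :
    ¬ ∃ S : Fin m → Finset α, IsNashD beta alpha S ∧ ∃ i : Fin m, 1 < (S i).card :=
  scigD_no_big_strategy_general beta alpha halpha
end

section
/- In the set-cover instance game with the non-deterministic greedy algorithm, if α = β/2, then the joint strategy in which each element e_k of U is chosen as the single-element strategy of exactly two agents (assuming m = 2n) is a pure Nash equilibrium. -/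
open Finset

/-! When every agent holds at most one element, the greedy algorithm simply scans the order
and selects each agent whose element is still uncovered, so an agent is selected iff it
precedes every other holder of its element. In the paired profile this happens with
probability `1/2`, so each agent's utility is `β/2 - α = 0`. Deviating to `∅` gives `0`; a set
of two or more elements costs at least `2α = β`; and after a deviation to `{f}` some other
agent still holds `f`, so the probability drops to at most `1/2` and the utility to at most
`0`. -/

theorem List.not_of_idxOf_lt_of_find?_eq_some {β : Type*} [DecidableEq β] {p : β → Bool}
    {L : List β} {w j : β} (hw : L.find? p = some w) (hlt : L.idxOf j < L.idxOf w) :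
    p j = false := by
  have hidx : L.findIdx p = L.idxOf w := by
    rw [List.findIdx_eq_getD_bind_find?_idxOf?, hw, Option.bind_some, List.idxOf_eq_getD_idxOf?]
  have := List.not_of_lt_findIdx (p := p) (hidx ▸ hlt)
  rwa [List.getElem_idxOf] at this

theorem List.idxOf_map_finRange {m : ℕ} (π : Equiv.Perm (Fin m)) (a : Fin m) :
    ((List.finRange m).map π).idxOf a = π.symm a := by
  have hnd : ((List.finRange m).map π).Nodup := (List.nodup_finRange m).map π.injective
  have hlen : (π.symm a : ℕ) < ((List.finRange m).map π).length := by simp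
  have hget : ((List.finRange m).map π)[(π.symm a : ℕ)] = a := by simp
  rw [← hnd.idxOf_getElem _ hlen, hget]

theorem Finset.exists_ne_eq_pair_of_card_eq_two {β : Type*} [DecidableEq β] {s : Finset β}
    {a : β} (ha : a ∈ s) (hs : #s = 2) : ∃ b ≠ a, s = {a, b} := by
  obtain ⟨x, y, hxy, rfl⟩ := card_eq_two.mp hs
  rcases (by simpa using ha : a = x ∨ a = y) with rfl | rfl
  · exact ⟨y, hxy.symm, rfl⟩
  · exact ⟨x, hxy, pair_comm _ _⟩

theorem two_mul_card_perm_symm_lt {ι : Type*} [LinearOrder ι] [Fintype ι] {i j : ι}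
    (hij : i ≠ j) :
    2 * #{π : Equiv.Perm ι | π.symm i < π.symm j} = (Fintype.card ι).factorial := by
  have hswap : #{π : Equiv.Perm ι | π.symm i < π.symm j}
      = #{π : Equiv.Perm ι | ¬ π.symm i < π.symm j} := by
    refine card_equiv (Equiv.mulLeft (Equiv.swap i j)) fun π => ?_
    have hne : π.symm i ≠ π.symm j := π.symm.injective.ne hij
    simp only [mem_filter, mem_univ, true_and, Equiv.coe_mulLeft, Equiv.Perm.mul_def,
      Equiv.symm_trans_apply, Equiv.symm_swap, Equiv.swap_apply_left, Equiv.swap_apply_right]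
    exact ⟨fun h => lt_asymm h, fun h => lt_of_le_of_ne (not_lt.mp h) hne⟩
  rw [two_mul]
  nth_rw 2 [hswap]
  rw [card_filter_add_card_filter_not, card_univ, Fintype.card_perm]

section GreedyOnSingletons

variable {α : Type*} [DecidableEq α] {m : ℕ}

theorem bestIdx_eq_getD_find? {S : Fin m → Finset α} {U : Finset α}
    (hS : ∀ j, #(S j ∩ U) ≤ 1) (l : List (Fin m)) (b : Fin m) :
    bestIdx S U l b = ((b :: l).find? fun j => (S j ∩ U).Nonempty).getD b := by
  induction l generalizing b with
  | nil => by_cases hb : (S b ∩ U).Nonempty <;> simp [bestIdx, hb]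
  | cons i l ih =>
    have hbi := hS i
    rw [bestIdx, ih]
    by_cases hb : (S b ∩ U).Nonempty
    · have := hb.card_pos
      simp [hb, show ¬ #(S b ∩ U) < #(S i ∩ U) by omega]
    · by_cases hi : (S i ∩ U).Nonempty
      · have := hi.card_pos
        simp_all
      · simp_all

theorem find?_eq_some_bestIdx {S : Fin m → Finset α} {U : Finset α}
    (hS : ∀ j, #(S j ∩ U) ≤ 1) {l : List (Fin m)} {b : Fin m}
    (hbest : (S (bestIdx S U l b) ∩ U).Nonempty) :
    (b :: l).find? (fun j => (S j ∩ U).Nonempty) = some (bestIdx S U l b) := by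
  rw [bestIdx_eq_getD_find? hS] at hbest ⊢
  cases hfind : (b :: l).find? (fun j => (S j ∩ U).Nonempty) with
  | none =>
    rw [hfind, Option.getD_none] at hbest
    simpa [hbest] using List.find?_eq_none.mp hfind b List.mem_cons_self
  | some w => rfl

theorem bestIdx_inter_nonempty {S : Fin m → Finset α} {U : Finset α}
    (hS : ∀ j, #(S j ∩ U) ≤ 1) {l : List (Fin m)} {b j : Fin m} (hj : j ∈ b :: l)
    (hne : (S j ∩ U).Nonempty) : (S (bestIdx S U l b) ∩ U).Nonempty := by
  obtain ⟨w, hw⟩ := Option.isSome_iff_exists.mp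
    ((List.find?_isSome (p := fun j => decide (S j ∩ U).Nonempty)).mpr
      ⟨j, hj, decide_eq_true hne⟩)
  rw [bestIdx_eq_getD_find? hS, hw, Option.getD_some]
  simpa using List.find?_some hw

theorem mem_greedyList_iff {S : Fin m → Finset α} (hS : ∀ j, #(S j) ≤ 1)
    (L : List (Fin m)) (U : Finset α) (i : Fin m) :
    i ∈ greedyList S L U ↔
      i ∈ L ∧ (S i ∩ U).Nonempty ∧ ∀ j, L.idxOf j < L.idxOf i → S j ≠ S i := by
  have hSU (U : Finset α) (j : Fin m) : #(S j ∩ U) ≤ 1 :=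
    (card_le_card inter_subset_left).trans (hS j)
  induction L, U using greedyList.induct S with
  | case1 U => simp [greedyList]
  | case2 U b rest w hw ih =>
    rw [greedyList, dif_pos hw, List.mem_cons]
    refine (or_congr_right ih).trans ?_
    set L := b :: rest
    have hfind := find?_eq_some_bestIdx (hSU U) hw
    have hwL : w ∈ L := List.mem_of_find?_eq_some hfind
    have hfirst (j : Fin m) (hj : L.idxOf j < L.idxOf w) : ¬ (S j ∩ U).Nonempty := by
      simpa using List.not_of_idxOf_lt_of_find?_eq_some hfind hj
    constructor
    · rintro (rfl | ⟨hiL, hne, hbefore⟩)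
      · exact ⟨hwL, hw, fun j hj hSj => hfirst j hj (hSj ▸ hw)⟩
      · exact ⟨hiL, hne.mono (inter_subset_inter_left sdiff_subset), hbefore⟩
    · rintro ⟨hiL, ⟨x, hx⟩, hbefore⟩
      by_cases hiw : i = w
      · exact Or.inl hiw
      have hwi : L.idxOf w < L.idxOf i := by
        have hne : L.idxOf i ≠ L.idxOf w := fun h => hiw ((List.idxOf_inj hiL).mp h)
        have hnlt : ¬ L.idxOf i < L.idxOf w := fun h => hfirst i h ⟨x, hx⟩
        omega
      have hsingleton {j : Fin m} (hj : x ∈ S j) : S j = {x} :=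
        eq_singleton_iff_unique_mem.mpr ⟨hj, fun y hy => card_le_one.mp (hS j) y hy x hj⟩
      obtain ⟨hxi, hxU⟩ := mem_inter.mp hx
      have hxw : x ∉ S w := fun hxw =>
        hbefore w hwi ((hsingleton hxw).trans (hsingleton hxi).symm)
      exact Or.inr ⟨hiL, ⟨x, mem_inter.mpr ⟨hxi, mem_sdiff.mpr ⟨hxU, hxw⟩⟩⟩,
        hbefore⟩
  | case3 U b rest w hstop =>
    rw [greedyList, dif_neg hstop]
    simp only [List.not_mem_nil, false_iff, not_and]
    exact fun hiL hne _ => hstop (bestIdx_inter_nonempty (hSU U) hiL hne)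

def firstHolderOrders (S : Fin m → Finset α) (i : Fin m) : Finset (Equiv.Perm (Fin m)) :=
  {π | ∀ j, π.symm j < π.symm i → S j ≠ S i}

theorem mem_greedyList_map_perm_iff {S : Fin m → Finset α} (hS : ∀ j, #(S j) ≤ 1)
    (π : Equiv.Perm (Fin m)) (i : Fin m) :
    i ∈ greedyList S ((List.finRange m).map π) (unionSet S) ↔
      (S i).Nonempty ∧ π ∈ firstHolderOrders S i := by
  have hSi : S i ∩ unionSet S = S i := inter_eq_left.mpr (subset_biUnion_of_mem S (mem_univ i))
  have hi : i ∈ (List.finRange m).map π :=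
    List.mem_map.mpr ⟨π.symm i, List.mem_finRange _, π.apply_symm_apply i⟩
  simp only [mem_greedyList_iff hS, hi, hSi, List.idxOf_map_finRange, Fin.val_fin_lt, true_and,
    firstHolderOrders, mem_filter, mem_univ]

theorem probSel_eq_zero_of_eq_empty {S : Fin m → Finset α} (hS : ∀ j, #(S j) ≤ 1) {i : Fin m}
    (hi : S i = ∅) : probSel S i = 0 := by
  simp [probSel, mem_greedyList_map_perm_iff hS, hi]

theorem probSel_eq_card_firstHolderOrders {S : Fin m → Finset α} (hS : ∀ j, #(S j) ≤ 1)
    {i : Fin m} (hi : (S i).Nonempty) :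
    probSel S i = #(firstHolderOrders S i) / m.factorial := by
  simp only [probSel, mem_greedyList_map_perm_iff hS, hi, true_and, filter_mem_eq_inter,
    univ_inter]

theorem probSel_le_one (S : Fin m → Finset α) (i : Fin m) : probSel S i ≤ 1 := by
  rw [probSel, div_le_one (by positivity)]
  exact_mod_cast (card_filter_le _ _).trans_eq
    (by rw [card_univ, Fintype.card_perm, Fintype.card_fin])

theorem firstHolderOrders_subset {S : Fin m → Finset α} {i j : Fin m} (hji : j ≠ i)
    (hSji : S j = S i) :
    firstHolderOrders S i ⊆ ({π | π.symm i < π.symm j} : Finset (Equiv.Perm (Fin m))) := by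
  intro π
  simp only [firstHolderOrders, mem_filter, mem_univ, true_and]
  exact fun hfirst => lt_of_le_of_ne (not_lt.mp fun h => hfirst j h hSji)
    (π.symm.injective.ne hji.symm)

theorem firstHolderOrders_eq {S : Fin m → Finset α} {i p : Fin m} (hpi : p ≠ i)
    (hholders : ∀ j, S j = S i ↔ j = i ∨ j = p) :
    firstHolderOrders S i = ({π | π.symm i < π.symm p} : Finset (Equiv.Perm (Fin m))) := by
  refine subset_antisymm (firstHolderOrders_subset hpi ((hholders p).mpr (.inr rfl))) ?_
  intro π
  simp only [firstHolderOrders, mem_filter, mem_univ, true_and]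
  intro hip j hj hSj
  rcases (hholders j).mp hSj with rfl | rfl
  exacts [lt_irrefl _ hj, lt_asymm hj hip]

theorem probSel_le_half {S : Fin m → Finset α} (hS : ∀ j, #(S j) ≤ 1) {i j : Fin m}
    (hji : j ≠ i) (hSji : S j = S i) : probSel S i ≤ 1 / 2 := by
  rcases (S i).eq_empty_or_nonempty with hi | hi
  · rw [probSel_eq_zero_of_eq_empty hS hi]
    norm_num
  have hcard := card_le_card (firstHolderOrders_subset hji hSji)
  have hhalf := two_mul_card_perm_symm_lt hji.symm
  rw [Fintype.card_fin] at hhalf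
  rw [probSel_eq_card_firstHolderOrders hS hi, div_le_div_iff₀ (by positivity) two_pos]
  exact_mod_cast (by omega)

theorem probSel_eq_half {S : Fin m → Finset α} (hS : ∀ j, #(S j) ≤ 1) {i p : Fin m}
    (hi : (S i).Nonempty) (hpi : p ≠ i) (hholders : ∀ j, S j = S i ↔ j = i ∨ j = p) :
    probSel S i = 1 / 2 := by
  have hhalf := two_mul_card_perm_symm_lt hpi.symm
  rw [Fintype.card_fin] at hhalf
  rw [probSel_eq_card_firstHolderOrders hS hi, firstHolderOrders_eq hpi hholders,
    div_eq_div_iff (by positivity) two_ne_zero]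
  exact_mod_cast (by omega)

end GreedyOnSingletons

theorem utilN_update_nonpos {α : Type*} [DecidableEq α] {m : ℕ} {beta : ℝ}
    (hbeta : 0 ≤ beta) {S : Fin m → Finset α} (hS : ∀ j, #(S j) ≤ 1) {i : Fin m}
    (hcovered : ∀ f, ∃ j ≠ i, S j = {f}) (T : Finset α) :
    utilN beta (beta / 2) (Function.update S i T) i ≤ 0 := by
  have hS' (hT : #T ≤ 1) (j : Fin m) : #(Function.update S i T j) ≤ 1 := by
    rcases eq_or_ne j i with rfl | hj
    · simpa using hT
    · simpa [hj] using hS j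
  rw [utilN, Function.update_self]
  rcases (show #T = 0 ∨ #T = 1 ∨ 2 ≤ #T by omega) with hT | hT | hT
  · rw [probSel_eq_zero_of_eq_empty (hS' (by omega)) (by simpa using card_eq_zero.mp hT), hT]
    simp
  · obtain ⟨f, rfl⟩ := card_eq_one.mp hT
    obtain ⟨j, hji, hSj⟩ := hcovered f
    have hle := probSel_le_half (hS' hT.le) hji (by simp [hji, hSj])
    rw [hT]
    nlinarith
  · have hle := probSel_le_one (Function.update S i T) i
    have hT' : (2 : ℝ) ≤ #T := by exact_mod_cast hT
    nlinarith

theorem scigN_paired_singletons_nash_general {α : Type*} [DecidableEq α] {m : ℕ}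
    (beta alpha : ℝ) (hbeta : 0 < beta)
    (hab : alpha = beta / 2)
    (S : Fin m → Finset α)
    (hsing : ∀ i : Fin m, ∃ e : α, S i = {e})
    (hpairs : ∀ e : α, (Finset.univ.filter (fun i : Fin m => S i = {e})).card = 2) :
    IsNashN beta alpha S := by
  intro i T
  have hS (j : Fin m) : #(S j) ≤ 1 := by
    obtain ⟨e, he⟩ := hsing j
    simp [he]
  obtain ⟨e, he⟩ := hsing i
  obtain ⟨p, hpi, hpair⟩ :=
    exists_ne_eq_pair_of_card_eq_two (mem_filter.mpr ⟨mem_univ i, he⟩) (hpairs e)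
  have hholders (j : Fin m) : S j = S i ↔ j = i ∨ j = p := by
    simpa [he] using Finset.ext_iff.mp hpair j
  have hcovered (f : α) : ∃ j ≠ i, S j = {f} := by
    obtain ⟨j, hj, hji⟩ := exists_mem_ne (by rw [hpairs f]; norm_num) i
    exact ⟨j, hji, (mem_filter.mp hj).2⟩
  have hzero : utilN beta alpha S i = 0 := by
    rw [utilN, probSel_eq_half hS (he ▸ singleton_nonempty e) hpi hholders, he, hab,
      card_singleton, Nat.cast_one]
    ring
  rw [hzero, hab]
  exact utilN_update_nonpos hbeta.le hS hcovered T

/-- With the non-deterministic greedy algorithm, m = 2n and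
α = β/2, the joint strategy in which every element of U is the single-element
strategy of exactly two agents is a pure Nash equilibrium. -/
theorem scigN_paired_singletons_nash {α : Type*} [Fintype α] [DecidableEq α] {m : ℕ}
    (beta alpha : ℝ) (hbeta : 0 < beta) (halpha : 0 < alpha)
    (hm : m = 2 * Fintype.card α) (hab : alpha = beta / 2)
    (S : Fin m → Finset α)
    (hsing : ∀ i : Fin m, ∃ e : α, S i = {e})
    (hpairs : ∀ e : α, (Finset.univ.filter (fun i : Fin m => S i = {e})).card = 2) :
    IsNashN beta alpha S :=
  scigN_paired_singletons_nash_general beta alpha hbeta hab S hsing hpairs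
end

section
/- In the set-cover instance game with the non-deterministic greedy algorithm, for an integer ρ ≥ 2 with m > ρn and β/((1+ρ)n) < α ≤ β/(ρn), the joint strategy in which exactly ρ agents choose S_i = U and the remaining m − ρ agents choose the empty set is a pure Nash equilibrium. -/
/-!
As soon as some agent holds all of `U`, the greedy algorithm selects the first such agent in
the random order and stops. Swapping two full agents is a bijection between the permutations
in which either comes first, so each of the `k` full agents is selected with probability `1/k`
and every other agent with probability `0`. Hence in the profile a full agent earns
`β/ρ - αn ≥ 0` and an empty one `0`, while switching to `U` earns `β/(ρ+1) - αn < 0`, and any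
other deviation is never selected (since `ρ ≥ 2`, another full agent remains) and costs `α|T|`.
-/


open Finset

open Equiv

section Greedy

variable {α : Type*} [DecidableEq α] {m : ℕ} (S : Fin m → Finset α) (Ucov : Finset α)

lemma card_inter_lt_card_of_not_subset {s : Finset α} (h : ¬ Ucov ⊆ s) :
    #(s ∩ Ucov) < #Ucov :=
  card_lt_card (ssubset_of_subset_of_ne inter_subset_right (mt inter_eq_right.mp h))

/-- The first agent covering all of `Ucov` is invariant under one step of the `bestIdx` scan. -/
lemma find?_cons_bestIdx_step (b i : Fin m) (rest : List (Fin m)) :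
    ((if #(S b ∩ Ucov) < #(S i ∩ Ucov) then i else b) :: rest).find? (fun x => Ucov ⊆ S x)
      = (b :: i :: rest).find? (fun x => Ucov ⊆ S x) := by
  by_cases hb : Ucov ⊆ S b
  · rw [if_neg (by rw [inter_eq_right.mpr hb]; exact (card_le_card inter_subset_right).not_gt)]
    simp [hb]
  by_cases hi : Ucov ⊆ S i
  · rw [if_pos (by rw [inter_eq_right.mpr hi]; exact card_inter_lt_card_of_not_subset Ucov hb)]
    simp [hb, hi]
  · split_ifs <;> simp [hb, hi]

lemma bestIdx_eq_of_find?_eq_some {l : List (Fin m)} {b j : Fin m}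
    (h : (b :: l).find? (fun x => Ucov ⊆ S x) = some j) : bestIdx S Ucov l b = j := by
  induction l generalizing b with
  | nil => simp at h; exact h.2
  | cons i rest ih => exact ih (by rwa [find?_cons_bestIdx_step])

lemma greedyList_empty (order : List (Fin m)) : greedyList S order ∅ = [] := by
  cases order <;> simp [greedyList]

lemma greedyList_eq_singleton {order : List (Fin m)} {j : Fin m} (hU : Ucov.Nonempty)
    (h : order.find? (fun x => Ucov ⊆ S x) = some j) : greedyList S order Ucov = [j] := by
  cases order with
  | nil => simp at h
  | cons b rest =>
    have hj : Ucov ⊆ S j := by simpa using List.find?_some h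
    rw [greedyList]
    simp [bestIdx_eq_of_find?_eq_some S Ucov h, inter_eq_right.mpr hj, hU,
      sdiff_eq_empty_iff_subset.mpr hj, greedyList_empty]

end Greedy

section FirstInPermutedList

variable {ι : Type*} (p : ι → Bool) (l : List ι)

lemma exists_find?_map_perm_eq_some {i : ι} (hl : ∀ x, x ∈ l) (hi : p i) (π : Perm ι) :
    ∃ k, (l.map π).find? p = some k :=
  Option.isSome_iff_exists.mp <| List.find?_isSome.mpr
    ⟨i, List.mem_map.mpr ⟨π.symm i, hl _, π.apply_symm_apply i⟩, hi⟩

variable [DecidableEq ι]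

lemma find?_map_swap_mul {i k : ι} (hik : p i = p k) (π : Perm ι) :
    (l.map (swap i k * π)).find? p = ((l.map π).find? p).map (swap i k) := by
  have hp : p ∘ swap i k = p := by
    rw [comp_swap_eq_update, hik, Function.update_eq_self, ← hik, Function.update_eq_self]
  rw [Perm.coe_mul, ← List.map_map, List.find?_map, hp]

lemma card_find?_map_eq_some_eq [Fintype ι] {i k : ι} (hi : p i) (hk : p k) :
    #{π : Perm ι | (l.map π).find? p = some k} = #{π : Perm ι | (l.map π).find? p = some i} :=
  card_equiv (Equiv.mulLeft (swap i k)) fun π => by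
    simp only [mem_filter, mem_univ, true_and, coe_mulLeft,
      find?_map_swap_mul p l (hi.trans hk.symm), Option.map_eq_some_iff, swap_apply_eq_iff,
      swap_apply_left, exists_eq_right]

theorem card_find?_map_eq_some_mul_card [Fintype ι] {i : ι} (hl : ∀ x, x ∈ l) (hi : p i) :
    #{π : Perm ι | (l.map π).find? p = some i} * #{x | p x} = (Fintype.card ι).factorial := by
  have hmaps : Set.MapsTo (fun π : Perm ι => (l.map π).find? p) ↑(univ : Finset (Perm ι))
      ↑(({x | p x} : Finset ι).map Function.Embedding.some) := by
    intro π _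
    obtain ⟨k, hk⟩ := exists_find?_map_perm_eq_some p l hl hi π
    simp only [hk, coe_map, Set.mem_image, mem_coe, mem_filter, mem_univ, true_and,
      Function.Embedding.some_apply, Option.some.injEq, exists_eq_right]
    exact List.find?_some hk
  rw [← Fintype.card_perm, ← card_univ, card_eq_sum_card_fiberwise hmaps, sum_map]
  simp only [Function.Embedding.some_apply]
  rw [sum_congr rfl fun k hk => card_find?_map_eq_some_eq p l hi (mem_filter.mp hk).2, sum_const,
    smul_eq_mul, mul_comm]

end FirstInPermutedList

section Game

variable {α : Type*} [Fintype α] [DecidableEq α] {m : ℕ} {S : Fin m → Finset α}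

def fullAgents (S : Fin m → Finset α) : Finset (Fin m) := {x | S x = univ}

lemma mem_fullAgents {i : Fin m} : i ∈ fullAgents S ↔ S i = univ := by
  simp [fullAgents]

lemma fullAgents_update_univ (i : Fin m) :
    fullAgents (Function.update S i univ) = insert i (fullAgents S) := by
  ext x
  by_cases hx : x = i <;> simp [mem_fullAgents, hx]

lemma unionSet_eq_univ {j : Fin m} (hj : S j = univ) : unionSet S = univ :=
  eq_univ_of_forall fun x => mem_biUnion.mpr ⟨j, mem_univ j, hj ▸ mem_univ x⟩

variable [Nonempty α]

lemma fullAgents_eq_of_univ_of_empty {I : Finset (Fin m)} (hfull : ∀ i ∈ I, S i = univ)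
    (hemp : ∀ i ∉ I, S i = ∅) : fullAgents S = I := by
  ext x
  by_cases hx : x ∈ I
  · simp [mem_fullAgents, hx, hfull x hx]
  · simp [mem_fullAgents, hx, hemp x hx, univ_nonempty.ne_empty.symm]

lemma mem_greedyList_iff_find? {j : Fin m} (hj : S j = univ) (π : Perm (Fin m)) (i : Fin m) :
    i ∈ greedyList S ((List.finRange m).map π) (unionSet S) ↔
      ((List.finRange m).map π).find? (fun x => S x = univ) = some i := by
  obtain ⟨k, hk⟩ := exists_find?_map_perm_eq_some (fun x => S x = univ) (List.finRange m)
    List.mem_finRange (by simpa using hj) π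
  rw [unionSet_eq_univ hj, greedyList_eq_singleton S univ univ_nonempty
    (by simpa only [univ_subset_iff] using hk), hk]
  simp [eq_comm]

lemma probSel_eq_card_div {j : Fin m} (hj : S j = univ) (i : Fin m) :
    probSel S i = #{π : Perm (Fin m) |
      ((List.finRange m).map π).find? (fun x => S x = univ) = some i} / (m.factorial : ℝ) := by
  simp only [probSel, mem_greedyList_iff_find? hj]

lemma probSel_eq_inv_card {i : Fin m} (hi : S i = univ) :
    probSel S i = (#(fullAgents S) : ℝ)⁻¹ := by
  have h := card_find?_map_eq_some_mul_card (fun x => S x = univ) (List.finRange m)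
    List.mem_finRange (by simpa using hi)
  simp only [Fintype.card_fin, decide_eq_true_eq] at h
  have hne : #{π : Perm (Fin m) |
      ((List.finRange m).map π).find? (fun x => S x = univ) = some i} ≠ 0 :=
    left_ne_zero_of_mul (h ▸ m.factorial_ne_zero)
  rw [probSel_eq_card_div hi, ← h, Nat.cast_mul, div_mul_cancel_left₀ (Nat.cast_ne_zero.mpr hne),
    fullAgents]

lemma probSel_eq_zero {i j : Fin m} (hj : S j = univ) (hi : S i ≠ univ) : probSel S i = 0 := by
  rw [probSel_eq_card_div hj, filter_false_of_mem fun π _ h => hi (by simpa using List.find?_some h)]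
  simp

lemma utilN_of_eq_univ (beta alpha : ℝ) {i : Fin m} (hi : S i = univ) :
    utilN beta alpha S i = beta / #(fullAgents S) - alpha * Fintype.card α := by
  rw [utilN, probSel_eq_inv_card hi, hi, card_univ, div_eq_mul_inv]

lemma utilN_of_ne_univ (beta alpha : ℝ) {i j : Fin m} (hj : S j = univ) (hi : S i ≠ univ) :
    utilN beta alpha S i = -(alpha * #(S i)) := by
  rw [utilN, probSel_eq_zero hj hi, mul_zero, zero_sub]

lemma utilN_update_univ (beta alpha : ℝ) {i : Fin m} (hi : S i ≠ univ) :
    utilN beta alpha (Function.update S i univ) i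
      = beta / (#(fullAgents S) + 1) - alpha * Fintype.card α := by
  rw [utilN_of_eq_univ beta alpha (Function.update_self i univ S), fullAgents_update_univ i,
    card_insert_of_notMem (mt mem_fullAgents.mp hi), Nat.cast_succ]

lemma utilN_update_nonpos_s9 (beta : ℝ) {alpha : ℝ} (halpha : 0 ≤ alpha) {i j : Fin m}
    (hj : S j = univ) (hji : j ≠ i) {T : Finset α} (hT : T ≠ univ) :
    utilN beta alpha (Function.update S i T) i ≤ 0 := by
  rw [utilN_of_ne_univ beta alpha (j := j) (by simp [hji, hj]) (by simp [hT]),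
    Function.update_self, neg_nonpos]
  positivity

end Game

theorem scigN_rho_full_nash_general {α : Type*} [Fintype α] [DecidableEq α] {m : ℕ}
    (beta alpha : ℝ) (halpha : 0 < alpha)
    (hn : 1 ≤ Fintype.card α)
    (rho : ℕ) (hrho : 2 ≤ rho)
    (hlo : beta / (((1 : ℝ) + rho) * (Fintype.card α : ℝ)) < alpha)
    (hhi : alpha ≤ beta / ((rho : ℝ) * (Fintype.card α : ℝ)))
    (S : Fin m → Finset α) (I : Finset (Fin m)) (hI : I.card = rho)
    (hfull : ∀ i ∈ I, S i = Finset.univ)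
    (hemp : ∀ i ∉ I, S i = ∅) :
    IsNashN beta alpha S := by
  have : Nonempty α := Fintype.card_pos_iff.mp hn
  have hnpos : (0 : ℝ) < Fintype.card α := by exact_mod_cast hn
  have hFI : fullAgents S = I := fullAgents_eq_of_univ_of_empty hfull hemp
  have hF : #(fullAgents S) = rho := hFI ▸ hI
  have hnot_full : ∀ i ∉ I, S i ≠ univ := fun i hi h => hi (hFI ▸ mem_fullAgents.mpr h)
  intro i T
  have hstay : 0 ≤ utilN beta alpha S i := by
    by_cases hi : i ∈ I
    · rw [utilN_of_eq_univ beta alpha (hfull i hi), hF, sub_nonneg, le_div_iff₀ (by positivity)]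
      rw [le_div_iff₀ (by positivity)] at hhi
      linarith
    · obtain ⟨j, hj⟩ := card_pos.mp (hI ▸ (by omega : 0 < rho))
      simp [utilN_of_ne_univ beta alpha (hfull j hj) (hnot_full i hi), hemp i hi]
  by_cases hT : T = univ
  · by_cases hi : i ∈ I
    · rw [hT, ← hfull i hi, Function.update_eq_self]
    have hjoin : beta / (rho + 1) < alpha * Fintype.card α := by
      rw [div_lt_iff₀ (by positivity)] at hlo ⊢
      linarith
    rw [hT, utilN_update_univ beta alpha (hnot_full i hi), hF]
    linarith
  · obtain ⟨j, hjI, hji⟩ := exists_mem_ne (by omega : 1 < #I) i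
    exact (utilN_update_nonpos_s9 beta halpha.le (hfull j hjI) hji hT).trans hstay

/-- With the non-deterministic greedy algorithm, for an integer
ρ ≥ 2 with m > ρn and β/((1+ρ)n) < α ≤ β/(ρn), the joint strategy in which
exactly ρ agents choose all of U and the rest choose ∅ is a pure Nash
equilibrium. -/
theorem scigN_rho_full_nash {α : Type*} [Fintype α] [DecidableEq α] {m : ℕ}
    (beta alpha : ℝ) (hbeta : 0 < beta) (halpha : 0 < alpha)
    (hn : 1 ≤ Fintype.card α)
    (rho : ℕ) (hrho : 2 ≤ rho) (hm : rho * Fintype.card α < m)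
    (hlo : beta / (((1 : ℝ) + rho) * (Fintype.card α : ℝ)) < alpha)
    (hhi : alpha ≤ beta / ((rho : ℝ) * (Fintype.card α : ℝ)))
    (S : Fin m → Finset α) (I : Finset (Fin m)) (hI : I.card = rho)
    (hfull : ∀ i ∈ I, S i = Finset.univ)
    (hemp : ∀ i ∉ I, S i = ∅) :
    IsNashN beta alpha S :=
  scigN_rho_full_nash_general beta alpha halpha hn rho hrho hlo hhi S I hI hfull hemp
end

section
/- In the set-cover instance game with the deterministic greedy algorithm, in any pure Nash equilibrium every agent receives nonnegative utility, and when α = β every agent receives exactly zero utility. -/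
open Finset

/- The empty strategy costs nothing, so it guarantees nonnegative utility, and hence so does
any equilibrium strategy.  When α = β, a selected agent has a nonempty subset and so utility
β(1 − |S_i|) ≤ 0, while an unselected one has −β|S_i| ≤ 0. -/

section SCIG

variable {α : Type*} [DecidableEq α] {m : ℕ}

theorem nonempty_of_mem_greedyList {S : Fin m → Finset α} {order : List (Fin m)}
    {U : Finset α} {j : Fin m} (hj : j ∈ greedyList S order U) : (S j).Nonempty := by
  fun_induction greedyList S order U with
  | case1 => simp at hj
  | case2 U b rest best hbest ih =>
    rcases List.mem_cons.mp hj with rfl | hj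
    · exact hbest.mono inter_subset_left
    · exact ih hj
  | case3 => simp at hj

theorem nonempty_of_mem_coverD {S : Fin m → Finset α} {i : Fin m} (hi : i ∈ coverD S) :
    (S i).Nonempty :=
  nonempty_of_mem_greedyList (List.mem_toFinset.mp hi)

theorem utilD_update_empty_nonneg {beta : ℝ} (hbeta : 0 ≤ beta) (alpha : ℝ)
    (S : Fin m → Finset α) (i : Fin m) :
    0 ≤ utilD beta alpha (Function.update S i ∅) i := by
  simp only [utilD, Function.update_self, card_empty, Nat.cast_zero, mul_zero, sub_zero]
  split_ifs <;> simp [hbeta]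

theorem IsNashD.utilD_nonneg {beta alpha : ℝ} {S : Fin m → Finset α}
    (hN : IsNashD beta alpha S) (hbeta : 0 ≤ beta) (i : Fin m) :
    0 ≤ utilD beta alpha S i :=
  (utilD_update_empty_nonneg hbeta alpha S i).trans (hN i ∅)

theorem utilD_self_nonpos {beta : ℝ} (hbeta : 0 ≤ beta) (S : Fin m → Finset α) (i : Fin m) :
    utilD beta beta S i ≤ 0 := by
  unfold utilD
  split_ifs with hi
  · have hcard : (1 : ℝ) ≤ (S i).card := by
      exact_mod_cast (nonempty_of_mem_coverD hi).card_pos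
    nlinarith
  · rw [zero_sub, neg_nonpos]
    positivity

end SCIG

theorem scigD_nash_utilities_general {α : Type*} [DecidableEq α] {m : ℕ}
    (beta alpha : ℝ) (hbeta : 0 < beta)
    (S : Fin m → Finset α) (hN : IsNashD beta alpha S) :
    (∀ i : Fin m, 0 ≤ utilD beta alpha S i) ∧
      (alpha = beta → ∀ i : Fin m, utilD beta alpha S i = 0) := by
  refine ⟨hN.utilD_nonneg hbeta.le, ?_⟩
  rintro rfl i
  exact le_antisymm (utilD_self_nonpos hbeta.le S i) (hN.utilD_nonneg hbeta.le i)

/-- With the deterministic greedy algorithm, in any pure Nash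
equilibrium every agent receives nonnegative utility; when α = β every agent
receives exactly zero utility. -/
theorem scigD_nash_utilities {α : Type*} [DecidableEq α] {m : ℕ}
    (beta alpha : ℝ) (hbeta : 0 < beta) (halpha : 0 < alpha)
    (S : Fin m → Finset α) (hN : IsNashD beta alpha S) :
    (∀ i : Fin m, 0 ≤ utilD beta alpha S i) ∧
      (alpha = beta → ∀ i : Fin m, utilD beta alpha S i = 0) :=
  scigD_nash_utilities_general beta alpha hbeta S hN
end
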